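/- Let n, p, q be natural numbers with p ≥ 3, q ≥ 1 and p + 2q ≤ n. Let W₁ be the set of all triples {1, 2, i} with 3 ≤ i ≤ p, and let W₂ be the set of all triples {i, p+2(j−1)+1, p+2(j−1)+2} with 3 ≤ i ≤ p and 1 ≤ j ≤ q, viewed as vertices of G(n,3,1). Then W₁ and W₂ are disjoint, |W₁ ∪ W₂| = (p−2)·(1+q), and the number of edges of G(n,3,1) with both endpoints in W₁ ∪ W₂ equals (p−2)·q + (p−2)·q·(q−1)/2. -/

import Mathlib

/-- The vertices of `G(n,3,1)`: 3-element subsets of `{1, …, n}`. -/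
abbrev Vtx (n : ℕ) := {s : Finset ℕ // s ⊆ Finset.Icc 1 n ∧ s.card = 3}

/-- The graph `G(n,3,1)`: two 3-element subsets of `{1, …, n}` are adjacent
iff they intersect in exactly one element. -/
def G (n : ℕ) : SimpleGraph (Vtx n) where
  Adj a b := (a.1 ∩ b.1).card = 1
  symm := ⟨by intro a b h; rwa [Finset.inter_comm]⟩
  loopless := ⟨by intro a h; rw [Finset.inter_self, a.2.2] at h; omega⟩

instance (n : ℕ) : DecidableRel (G n).Adj := fun a b =>
  inferInstanceAs (Decidable ((a.1 ∩ b.1).card = 1))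

instance (n : ℕ) : Fintype (Vtx n) :=
  Fintype.subtype ((Finset.Icc 1 n).powerset.filter fun s => s.card = 3) (by
    intro s
    simp [Finset.mem_powerset, and_comm])

instance (n : ℕ) (s : Set (Vtx n)) : DecidableRel ((G n).induce s).Adj := fun a b =>
  inferInstanceAs (Decidable (((a : Vtx n).1 ∩ (b : Vtx n).1).card = 1))

/-- The number of edges of `G(n,3,1)` with both endpoints in `W`. -/
def edgesIn (n : ℕ) (W : Finset (Vtx n)) : ℕ :=
  ((G n).induce (W : Set (Vtx n))).edgeFinset.card

/-- The independence number of `G(n,3,1)`. -/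
noncomputable def alpha (n : ℕ) : ℕ :=
  sSup {k | ∃ W : Finset (Vtx n), W.card = k ∧ ∀ u ∈ W, ∀ v ∈ W, ¬ (G n).Adj u v}

/-- The minimal number of edges induced on a vertex subset of cardinality `l`. -/
noncomputable def rmin (n l : ℕ) : ℕ :=
  sInf {m | ∃ W : Finset (Vtx n), W.card = l ∧ edgesIn n W = m}

/-!
Index the triples by `T(i, 0) = {1, 2, i}` and `T(i, j) = {i, p+2j-1, p+2j}` for `1 ≤ j ≤ q`,
with `3 ≤ i ≤ p`. For `j ≠ j'` the "block" parts of `T(i, j)` and `T(i', j')` are disjoint and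
avoid `[3, p]`, so the triples meet in `{i} ∩ {i'}`; for `j = j'` they share the whole block,
two points. Hence `T(i, j) ~ T(i', j')` iff `i = i'` and `j ≠ j'`: the induced graph is `p - 2`
disjoint copies of `K_{q+1}`, with `(p - 2) * (q + 1) * q / 2` edges.
-/

open Finset

theorem SimpleGraph.two_mul_card_edgeFinset_induce {V : Type*} (G : SimpleGraph V)
    [DecidableRel G.Adj] (s : Finset V) [DecidableRel (G.induce (s : Set V)).Adj]
    [Fintype (G.induce (s : Set V)).edgeSet] :
    2 * #(G.induce (s : Set V)).edgeFinset = #{e ∈ s ×ˢ s | G.Adj e.1 e.2} :=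
  calc 2 * #(G.induce (s : Set V)).edgeFinset
      = #{e : ↥(s : Set V) × ↥(s : Set V) | G.Adj e.1 e.2} := by
        convert (G.induce (s : Set V)).two_mul_card_edgeFinset
        rfl
    _ = #{e ∈ s ×ˢ s | G.Adj e.1 e.2} := by
        refine card_nbij (fun e ↦ (e.1.1, e.2.1)) ?_ ?_ ?_
        · intro e; simp
        · intro e _ e' _ h
          simp only [Prod.mk.injEq] at h
          exact Prod.ext (Subtype.ext h.1) (Subtype.ext h.2)
        · rintro ⟨x, y⟩ h
          simp only [coe_filter, mem_product, Set.mem_ofPred_eq] at h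
          exact ⟨(⟨x, h.1.1⟩, ⟨y, h.1.2⟩), by simpa using h.2, rfl⟩

theorem Finset.card_filter_image_product {α β : Type*} [DecidableEq β] {f : α → β}
    {s : Finset α} (hf : Set.InjOn f s) (r : β → β → Prop) [DecidableRel r] :
    #{e ∈ s.image f ×ˢ s.image f | r e.1 e.2} = #{e ∈ s ×ˢ s | r (f e.1) (f e.2)} := by
  rw [← prodMap_image_product, filter_image, card_image_of_injOn]
  · rfl
  · exact (hf.prodMap hf).mono (by simp +contextual [Set.subset_def])

theorem Finset.card_filter_fst_eq_snd_ne {α β : Type*} [DecidableEq α] [DecidableEq β]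
    (s : Finset α) (t : Finset β) :
    #{e ∈ (s ×ˢ t) ×ˢ (s ×ˢ t) | e.1.1 = e.2.1 ∧ e.1.2 ≠ e.2.2} = #s * #t.offDiag := by
  rw [← card_product]
  refine (card_nbij' (fun a ↦ ((a.1, a.2.1), (a.1, a.2.2))) (fun e ↦ (e.1.1, (e.1.2, e.2.2)))
    ?_ ?_ ?_ ?_).symm
  · intro a; simp +contextual
  · intro e; simp +contextual
  · intro a; simp
  · rintro ⟨⟨i, j⟩, ⟨i', j'⟩⟩; simp +contextual

def triple (p i j : ℕ) : Finset ℕ :=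
  if j = 0 then {1, 2, i} else {i, p + 2 * (j - 1) + 1, p + 2 * (j - 1) + 2}

section triple

variable {p i i' j j' : ℕ}

lemma mem_triple {x : ℕ} : x ∈ triple p i j ↔ x = i ∨ (j = 0 ∧ (x = 1 ∨ x = 2)) ∨
    (j ≠ 0 ∧ (x = p + 2 * (j - 1) + 1 ∨ x = p + 2 * (j - 1) + 2)) := by
  unfold triple
  split_ifs with hj
  · simp [hj]; omega
  · simp [hj]

lemma triple_subset_Icc {n q : ℕ} (hi : i ∈ Icc 3 p) (hj : j ≤ q) (hpq : p + 2 * q ≤ n) :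
    triple p i j ⊆ Icc 1 n := by
  intro x hx
  rw [mem_triple] at hx
  rw [mem_Icc] at hi ⊢
  omega

lemma card_triple (hi : i ∈ Icc 3 p) : #(triple p i j) = 3 := by
  rw [mem_Icc] at hi
  unfold triple
  split_ifs
  · exact card_eq_three.2 ⟨1, 2, i, by omega, by omega, by omega, rfl⟩
  · exact card_eq_three.2 ⟨_, _, _, by omega, by omega, by omega, rfl⟩

lemma triple_inter_triple_of_ne (hi : i ∈ Icc 3 p) (hi' : i' ∈ Icc 3 p) (h : j ≠ j') :
    triple p i j ∩ triple p i' j' = {i} ∩ {i'} := by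
  ext x
  simp only [mem_inter, mem_triple, mem_singleton]
  rw [mem_Icc] at hi hi'
  omega

lemma two_le_card_triple_inter_triple : 2 ≤ #(triple p i j ∩ triple p i' j) := by
  obtain ⟨a, b, hab, hsub⟩ :
      ∃ a b, a ≠ b ∧ {a, b} ⊆ triple p i j ∩ triple p i' j := by
    by_cases hj : j = 0
    · exact ⟨1, 2, by omega, by simp [triple, hj, insert_subset_iff]⟩
    · exact ⟨p + 2 * (j - 1) + 1, p + 2 * (j - 1) + 2, by omega,
        by simp [triple, hj, insert_subset_iff]⟩
  simpa [hab] using card_le_card hsub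

lemma card_triple_inter_triple_eq_one_iff (hi : i ∈ Icc 3 p) (hi' : i' ∈ Icc 3 p) :
    #(triple p i j ∩ triple p i' j') = 1 ↔ i = i' ∧ j ≠ j' := by
  by_cases hj : j = j'
  · subst hj
    have := two_le_card_triple_inter_triple (p := p) (i := i) (i' := i') (j := j)
    simp only [ne_eq, not_true_eq_false, and_false, iff_false]
    omega
  · rw [triple_inter_triple_of_ne hi hi' hj]
    by_cases h : i = i' <;> simp [h, hj]

lemma triple_injOn : Set.InjOn (fun a : ℕ × ℕ ↦ triple p a.1 a.2) {a | a.1 ∈ Icc 3 p} := by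
  rintro ⟨i, j⟩ hi ⟨i', j'⟩ hi' h
  simp only [Set.mem_ofPred_eq] at hi hi' h
  have hj : j = j' := by
    by_contra hj
    have : #(triple p i j) ≤ 1 :=
      calc #(triple p i j) = #({i} ∩ {i'}) := by
            rw [← triple_inter_triple_of_ne hi hi' hj, ← h, inter_self]
        _ ≤ #{i} := card_le_card inter_subset_left
        _ = 1 := card_singleton i
    have := card_triple (j := j) hi
    omega
  subst hj
  have : i ∈ triple p i' j := h ▸ mem_triple.2 (Or.inl rfl)
  rw [mem_triple] at this
  rw [mem_Icc] at hi hi'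
  simp only [Prod.mk.injEq, and_true]
  omega

end triple

lemma card_eq_of_image_val_eq_image_triple {n p q : ℕ} {W : Finset (Vtx n)}
    (hW : W.image Subtype.val = (Icc 3 p ×ˢ range (q + 1)).image fun a ↦ triple p a.1 a.2) :
    #W = (p - 2) * (q + 1) := by
  rw [← card_image_of_injective _ Subtype.val_injective, hW,
    card_image_of_injOn (triple_injOn.mono fun a ha ↦ (mem_product.1 ha).1)]
  simp

lemma two_mul_edgesIn_eq_of_image_val_eq_image_triple {n p q : ℕ} {W : Finset (Vtx n)}
    (hW : W.image Subtype.val = (Icc 3 p ×ˢ range (q + 1)).image fun a ↦ triple p a.1 a.2) :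
    2 * edgesIn n W = (p - 2) * ((q + 1) * q) := by
  set P := Icc 3 p ×ˢ range (q + 1)
  have hinj : Set.InjOn (fun a : ℕ × ℕ ↦ triple p a.1 a.2) P :=
    triple_injOn.mono fun a ha ↦ (mem_product.1 ha).1
  calc 2 * edgesIn n W
      = #{e ∈ W ×ˢ W | #(e.1.1 ∩ e.2.1) = 1} := (G n).two_mul_card_edgeFinset_induce W
    _ = #{e ∈ P ×ˢ P | #(triple p e.1.1 e.1.2 ∩ triple p e.2.1 e.2.2) = 1} := by
        rw [← card_filter_image_product Subtype.val_injective.injOn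
          (fun s t : Finset ℕ ↦ #(s ∩ t) = 1), hW]
        exact card_filter_image_product hinj fun s t ↦ #(s ∩ t) = 1
    _ = #{e ∈ P ×ˢ P | e.1.1 = e.2.1 ∧ e.1.2 ≠ e.2.2} := by
        refine congrArg card (filter_congr fun e he ↦ ?_)
        simp only [mem_product, P] at he
        exact card_triple_inter_triple_eq_one_iff he.1.1 he.2.1
    _ = (p - 2) * ((q + 1) * q) := by
        rw [card_filter_fst_eq_snd_ne, offDiag_card, ← Nat.mul_sub_one]
        simp

lemma image_val_union_eq_image_triple {n p q : ℕ} (hpq : p + 2 * q ≤ n)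
    {W₁ W₂ : Finset (Vtx n)}
    (hW₁ : ∀ v : Vtx n, v ∈ W₁ ↔ ∃ i ∈ Icc 3 p, v.1 = ({1, 2, i} : Finset ℕ))
    (hW₂ : ∀ v : Vtx n, v ∈ W₂ ↔ ∃ i ∈ Icc 3 p, ∃ j ∈ Icc 1 q,
      v.1 = ({i, p + 2 * (j - 1) + 1, p + 2 * (j - 1) + 2} : Finset ℕ)) :
    (W₁ ∪ W₂).image Subtype.val =
      (Icc 3 p ×ˢ range (q + 1)).image fun a ↦ triple p a.1 a.2 := by
  ext s
  simp only [mem_image, mem_union, mem_product, mem_range, Prod.exists]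
  constructor
  · rintro ⟨v, hv | hv, rfl⟩
    · obtain ⟨i, hi, hvi⟩ := (hW₁ v).1 hv
      exact ⟨i, 0, ⟨hi, by omega⟩, by simp [triple, hvi]⟩
    · obtain ⟨i, hi, j, hj, hvij⟩ := (hW₂ v).1 hv
      rw [mem_Icc] at hj
      exact ⟨i, j, ⟨hi, by omega⟩, by simp [triple, hvij, show j ≠ 0 by omega]⟩
  · rintro ⟨i, j, ⟨hi, hj⟩, rfl⟩
    let v : Vtx n := ⟨triple p i j, triple_subset_Icc hi (by omega) hpq, card_triple hi⟩
    refine ⟨v, ?_, rfl⟩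
    by_cases hj0 : j = 0
    · exact Or.inl ((hW₁ v).2 ⟨i, hi, by simp [v, triple, hj0]⟩)
    · exact Or.inr ((hW₂ v).2
        ⟨i, hi, j, mem_Icc.2 ⟨by omega, by omega⟩, by simp [v, triple, hj0]⟩)

theorem stmt_8_general (n p q : ℕ) (hpq : p + 2 * q ≤ n)
    (W₁ W₂ : Finset (Vtx n))
    (hW₁ : ∀ v : Vtx n, v ∈ W₁ ↔ ∃ i ∈ Finset.Icc 3 p,
      v.1 = ({1, 2, i} : Finset ℕ))
    (hW₂ : ∀ v : Vtx n, v ∈ W₂ ↔ ∃ i ∈ Finset.Icc 3 p, ∃ j ∈ Finset.Icc 1 q,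
      v.1 = ({i, p + 2 * (j - 1) + 1, p + 2 * (j - 1) + 2} : Finset ℕ)) :
    Disjoint W₁ W₂ ∧ (W₁ ∪ W₂).card = (p - 2) * (1 + q) ∧
      edgesIn n (W₁ ∪ W₂) = (p - 2) * q + (p - 2) * q * (q - 1) / 2 := by
  have hdisj : Disjoint W₁ W₂ := disjoint_left.2 fun v h₁ h₂ ↦ by
    obtain ⟨i, -, hv₁⟩ := (hW₁ v).1 h₁
    obtain ⟨i', hi', j, -, hv₂⟩ := (hW₂ v).1 h₂
    have : 1 ∈ v.1 := by simp [hv₁]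
    simp only [hv₂, mem_insert, mem_singleton] at this
    rw [mem_Icc] at hi'
    omega
  have hW := image_val_union_eq_image_triple hpq hW₁ hW₂
  have hedges := two_mul_edgesIn_eq_of_image_val_eq_image_triple hW
  have hsplit : (p - 2) * q * (q - 1) + 2 * ((p - 2) * q) = (p - 2) * ((q + 1) * q) := by
    cases q <;> simp; ring
  refine ⟨hdisj, ?_, by omega⟩
  rw [card_eq_of_image_val_eq_image_triple hW, add_comm]

/-- For `3 ≤ p`, `1 ≤ q`, `p + 2q ≤ n`, let `W₁` be the set of all triples
`{1, 2, i}` with `3 ≤ i ≤ p` and `W₂` the set of all triples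
`{i, p+2(j−1)+1, p+2(j−1)+2}` with `3 ≤ i ≤ p`, `1 ≤ j ≤ q`. Then `W₁` and `W₂`
are disjoint, `|W₁ ∪ W₂| = (p−2)(1+q)`, and `W₁ ∪ W₂` spans exactly
`(p−2)q + (p−2)q(q−1)/2` edges of `G(n,3,1)`. -/
theorem stmt_8 (n p q : ℕ) (hp : 3 ≤ p) (hq : 1 ≤ q) (hpq : p + 2 * q ≤ n)
    (W₁ W₂ : Finset (Vtx n))
    (hW₁ : ∀ v : Vtx n, v ∈ W₁ ↔ ∃ i ∈ Finset.Icc 3 p,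
      v.1 = ({1, 2, i} : Finset ℕ))
    (hW₂ : ∀ v : Vtx n, v ∈ W₂ ↔ ∃ i ∈ Finset.Icc 3 p, ∃ j ∈ Finset.Icc 1 q,
      v.1 = ({i, p + 2 * (j - 1) + 1, p + 2 * (j - 1) + 2} : Finset ℕ)) :
    Disjoint W₁ W₂ ∧ (W₁ ∪ W₂).card = (p - 2) * (1 + q) ∧
      edgesIn n (W₁ ∪ W₂) = (p - 2) * q + (p - 2) * q * (q - 1) / 2 :=
  stmt_8_general n p q hpq W₁ W₂ hW₁ hW₂
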